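/- arXiv:1204.2730 — 2 statements merged into one kernel-verified Lean document; each statement's English description precedes it below -/
import Mathlib

section
/- Let p, q ∈ ℂ[X] be coprime polynomials with deg p = D ≥ 1 and deg q < D, so that φ = p/q defines a rational map of degree D of the Riemann sphere with φ(∞) = ∞. If R(p) + R(p − q) + R(q) + 1 = D + 3, then there is exactly one complex number r such that r is a root of the Wronskian p′q − pq′ but not a root of p·(p − q)·q, and moreover r is a simple root of p′q − pq′. -/
/-!
Write `W = p'q - pq'`. Its coefficient of degree `D + deg q - 1` is `(D - deg q) lc(p) lc(q) ≠ 0`,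
so `deg W = D + deg q - 1`. Up to sign, `W` is the Wronskian of each of the coprime pairs
`(q, p)`, `(q, p - q)`, `(p, q)`, and at a root of multiplicity `m` of `f` the Wronskian of `f`
with a polynomial coprime to `f` vanishes to order exactly `m - 1`. Summing over the distinct
roots of `f` gives `deg f - R(f)`, so the roots of `p(p - q)q` carry
`2D + deg q - (D + 2) = D + deg q - 2` of the roots of `W` counted with multiplicity: exactly one
root of `W` is left, and it is simple.
-/

open Polynomial

noncomputable def numDistinctRoots (f : ℂ[X]) : ℕ := f.roots.toFinset.card

namespace Multiset

variable {α : Type*} [DecidableEq α]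

theorem sum_count_sub_one_add_card_toFinset (s : Multiset α) :
    ∑ a ∈ s.toFinset, (s.count a - 1) + s.toFinset.card = card s := by
  rw [← toFinset_sum_count_eq s, Finset.card_eq_sum_ones, ← Finset.sum_add_distrib]
  refine Finset.sum_congr rfl fun a ha => ?_
  have := one_le_count_iff_mem.mpr (mem_toFinset.mp ha)
  omega

theorem exists_count_eq_one_of_card_filter_add_one {s : Multiset α} {P : α → Prop}
    [DecidablePred P] (h : card (s.filter P) + 1 = card s) :
    ∃ r ∈ s, ¬ P r ∧ (∀ t ∈ s, ¬ P t → t = r) ∧ s.count r = 1 := by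
  have hcard : card (s.filter (¬ P ·)) = 1 := by
    have := congrArg card (filter_add_not P s)
    rw [card_add] at this
    omega
  obtain ⟨r, hr⟩ := card_eq_one.mp hcard
  have hmem : r ∈ s.filter (¬ P ·) := hr ▸ mem_singleton_self r
  obtain ⟨hrs, hrP⟩ := mem_filter.mp hmem
  refine ⟨r, hrs, hrP, fun t hts htP => ?_, ?_⟩
  · have : t ∈ s.filter (¬ P ·) := mem_filter.mpr ⟨hts, htP⟩
    rwa [hr, mem_singleton] at this
  · rw [← count_filter_of_pos (p := (¬ P ·)) hrP, hr, count_singleton_self]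

end Multiset

namespace Polynomial

theorem coeff_derivative_mul_natDegree_add_sub_one {R : Type*} [CommSemiring R] (f g : R[X]) :
    (derivative f * g).coeff (f.natDegree + g.natDegree - 1) =
      f.natDegree * f.leadingCoeff * g.leadingCoeff := by
  rcases h : f.natDegree with _ | n
  · simp [derivative_of_natDegree_zero h]
  · have hf' : (derivative f).natDegree ≤ n := by
      simpa [h] using natDegree_derivative_le f
    rw [Nat.add_right_comm, Nat.add_sub_cancel, coeff_mul_add_eq_of_natDegree_le hf' le_rfl,
      coeff_derivative, ← h, leadingCoeff, leadingCoeff, h]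
    push_cast
    ring

section CommRing

variable {R : Type*} [CommRing R]

theorem coeff_wronskian_natDegree_add_sub_one (f g : R[X]) :
    (wronskian g f).coeff (f.natDegree + g.natDegree - 1) =
      (f.natDegree - g.natDegree : R) * f.leadingCoeff * g.leadingCoeff := by
  rw [wronskian, coeff_sub, mul_comm g, coeff_derivative_mul_natDegree_add_sub_one, add_comm,
    coeff_derivative_mul_natDegree_add_sub_one]
  ring

theorem IsCoprime.not_isRoot_of_isRoot [Nontrivial R] {f g : R[X]} (h : IsCoprime f g) {a : R}
    (hf : f.IsRoot a) : ¬ g.IsRoot a := by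
  simpa [hf.eq_zero] using aeval_ne_zero_of_isCoprime h a

variable [IsDomain R]

section DecidableEq

variable [DecidableEq R]

theorem card_filter_isRoot_roots {f : R[X]} (hf : f ≠ 0) [DecidablePred f.IsRoot] (w : R[X]) :
    Multiset.card (w.roots.filter f.IsRoot) = ∑ a ∈ f.roots.toFinset, rootMultiplicity a w := by
  rw [← Multiset.sum_count_eq_card fun a ha => Multiset.mem_toFinset.mpr
    ((mem_roots hf).mpr (Multiset.of_mem_filter ha))]
  refine Finset.sum_congr rfl fun a ha => ?_
  rw [Multiset.count_filter_of_pos (isRoot_of_mem_roots (Multiset.mem_toFinset.mp ha)),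
    count_roots]

theorem roots_toFinset_mul {f g : R[X]} (hfg : f * g ≠ 0) :
    (f * g).roots.toFinset = f.roots.toFinset ∪ g.roots.toFinset := by
  rw [roots_mul hfg, Multiset.toFinset_add]

theorem IsCoprime.disjoint_roots_toFinset {f g : R[X]} (h : IsCoprime f g) :
    Disjoint f.roots.toFinset g.roots.toFinset :=
  Finset.disjoint_left.mpr fun _ ha hb => h.not_isRoot_of_isRoot
    (isRoot_of_mem_roots (Multiset.mem_toFinset.mp ha))
    (isRoot_of_mem_roots (Multiset.mem_toFinset.mp hb))

end DecidableEq

section CharZero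

variable [CharZero R]

theorem coeff_wronskian_natDegree_add_sub_one_ne_zero {f g : R[X]} (hg : g ≠ 0)
    (hfg : g.natDegree < f.natDegree) :
    (wronskian g f).coeff (f.natDegree + g.natDegree - 1) ≠ 0 := by
  have hf : f ≠ 0 := by rintro rfl; simp at hfg
  rw [coeff_wronskian_natDegree_add_sub_one]
  exact mul_ne_zero (mul_ne_zero (sub_ne_zero.mpr (Nat.cast_injective.ne hfg.ne'))
    (leadingCoeff_ne_zero.mpr hf)) (leadingCoeff_ne_zero.mpr hg)

theorem wronskian_ne_zero_of_natDegree_lt {f g : R[X]} (hg : g ≠ 0)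
    (hfg : g.natDegree < f.natDegree) : wronskian g f ≠ 0 := fun h =>
  coeff_wronskian_natDegree_add_sub_one_ne_zero hg hfg (by rw [h, coeff_zero])

theorem natDegree_wronskian_add_one {f g : R[X]} (hg : g ≠ 0) (hfg : g.natDegree < f.natDegree) :
    (wronskian g f).natDegree + 1 = f.natDegree + g.natDegree := by
  have := le_natDegree_of_ne_zero (coeff_wronskian_natDegree_add_sub_one_ne_zero hg hfg)
  have := natDegree_wronskian_lt_add (wronskian_ne_zero_of_natDegree_lt hg hfg)
  omega

theorem rootMultiplicity_wronskian_of_isRoot {f g : R[X]} {a : R} (hf : f ≠ 0)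
    (hfa : f.IsRoot a) (hga : ¬ g.IsRoot a) :
    rootMultiplicity a (wronskian g f) = rootMultiplicity a f - 1 := by
  obtain ⟨k, hk⟩ : ∃ k, rootMultiplicity a f = k + 1 :=
    Nat.exists_eq_add_one.mpr ((rootMultiplicity_pos hf).mpr hfa)
  set u := f /ₘ (X - C a) ^ rootMultiplicity a f
  have hfu : (X - C a) ^ (k + 1) * u = f := hk ▸ pow_mul_divByMonic_rootMultiplicity_eq f a
  have hua : u.eval a ≠ 0 := eval_divByMonic_pow_rootMultiplicity_ne_zero a hf
  set V := C ((k : R) + 1) * g * u + (X - C a) * (g * derivative u - derivative g * u)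
  have hVa : V.eval a ≠ 0 := by
    simp only [V, eval_add, eval_mul, eval_sub, eval_C, eval_X, sub_self, zero_mul, add_zero]
    exact mul_ne_zero (mul_ne_zero (Nat.cast_add_one_ne_zero k) hga) hua
  have hWV : wronskian g f = (X - C a) ^ k * V := by
    rw [wronskian, ← hfu, derivative_mul, derivative_pow]
    simp only [Nat.add_sub_cancel, derivative_sub, derivative_X, derivative_C, sub_zero,
      Nat.cast_add, Nat.cast_one, V]
    ring
  have hV : V ≠ 0 := fun h => hVa (by rw [h, eval_zero])
  rw [hWV, rootMultiplicity_mul (mul_ne_zero (pow_ne_zero _ (X_sub_C_ne_zero a)) hV),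
    rootMultiplicity_X_sub_C_pow, rootMultiplicity_eq_zero hVa, hk]
  omega

end CharZero

end CommRing

theorem sum_rootMultiplicity_wronskian_add_card_roots_toFinset {K : Type*} [Field K]
    [IsAlgClosed K] [CharZero K] [DecidableEq K] {f g : K[X]} (hf : f ≠ 0) (hfg : IsCoprime f g) :
    ∑ a ∈ f.roots.toFinset, rootMultiplicity a (wronskian g f) + f.roots.toFinset.card =
      f.natDegree := by
  rw [Finset.sum_congr rfl fun a ha => rootMultiplicity_wronskian_of_isRoot hf
    (isRoot_of_mem_roots (Multiset.mem_toFinset.mp ha))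
    (hfg.not_isRoot_of_isRoot (isRoot_of_mem_roots (Multiset.mem_toFinset.mp ha)))]
  simp only [← count_roots]
  rw [Multiset.sum_count_sub_one_add_card_toFinset, (IsAlgClosed.splits f).natDegree_eq_card_roots]

theorem card_filter_isRoot_roots_wronskian_add {K : Type*} [Field K] [IsAlgClosed K] [CharZero K]
    [DecidableEq K] {p q : K[X]} (hcop : IsCoprime p q) (hF : p * (p - q) * q ≠ 0) :
    Multiset.card ((wronskian q p).roots.filter (p * (p - q) * q).IsRoot) +
        (p.roots.toFinset.card + (p - q).roots.toFinset.card + q.roots.toFinset.card) =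
      p.natDegree + (p - q).natDegree + q.natDegree := by
  obtain ⟨hppq, hq0⟩ := mul_ne_zero_iff.mp hF
  obtain ⟨hp0, hpq0⟩ := mul_ne_zero_iff.mp hppq
  have hcop₁ : IsCoprime p (p - q) := by
    simpa using (IsCoprime.mul_sub_left_right_iff (z := 1)).mpr hcop
  have hcop₂ : IsCoprime (p - q) q := by
    simpa using (IsCoprime.sub_mul_left_left_iff (z := 1)).mpr hcop
  have hWpq : wronskian q (p - q) = wronskian q p := by
    rw [sub_eq_add_neg, wronskian_add_right, wronskian_neg_right, wronskian_self_eq_zero, neg_zero,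
      add_zero]
  have hWq : wronskian (-p) q = wronskian q p := by rw [wronskian_neg_left, wronskian_neg_eq]
  have sum_p := sum_rootMultiplicity_wronskian_add_card_roots_toFinset hp0 hcop
  have sum_pq := sum_rootMultiplicity_wronskian_add_card_roots_toFinset hpq0 hcop₂
  have sum_q := sum_rootMultiplicity_wronskian_add_card_roots_toFinset hq0 hcop.symm.neg_right
  rw [hWpq] at sum_pq
  rw [hWq] at sum_q
  rw [card_filter_isRoot_roots hF, roots_toFinset_mul hF, roots_toFinset_mul hppq,
    Finset.sum_union (Finset.disjoint_union_left.mpr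
      ⟨hcop.disjoint_roots_toFinset, hcop₂.disjoint_roots_toFinset⟩),
    Finset.sum_union hcop₁.disjoint_roots_toFinset]
  omega

end Polynomial

theorem unique_extra_branch_point_general (p q : ℂ[X]) (D : ℕ)
    (hp : p.natDegree = D) (hq : q.natDegree < D) (hcop : IsCoprime p q)
    (hcount : numDistinctRoots p + numDistinctRoots (p - q) + numDistinctRoots q + 1
      = D + 3) :
    ∃ r : ℂ, (derivative p * q - p * derivative q).IsRoot r ∧
      ¬ (p * (p - q) * q).IsRoot r ∧
      (∀ s : ℂ, (derivative p * q - p * derivative q).IsRoot s →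
        ¬ (p * (p - q) * q).IsRoot s → s = r) ∧
      rootMultiplicity r (derivative p * q - p * derivative q) = 1 := by
  rw [show derivative p * q - p * derivative q = wronskian q p by rw [wronskian]; ring]
  have hqp : q.natDegree < p.natDegree := hp ▸ hq
  have hpq : (p - q).natDegree = p.natDegree := natDegree_sub_eq_left_of_natDegree_lt hqp
  have hq0 : q ≠ 0 := by
    rintro rfl
    have := natDegree_eq_zero_of_isUnit (isCoprime_zero_right.mp hcop)
    omega
  have hF : p * (p - q) * q ≠ 0 := mul_ne_zero (mul_ne_zero (ne_zero_of_natDegree_gt hqp)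
    (ne_zero_of_natDegree_gt (hpq ▸ hqp))) hq0
  have hW0 := wronskian_ne_zero_of_natDegree_lt hq0 hqp
  have hdeg := natDegree_wronskian_add_one hq0 hqp
  rw [(IsAlgClosed.splits (wronskian q p)).natDegree_eq_card_roots] at hdeg
  have hbranch := card_filter_isRoot_roots_wronskian_add hcop hF
  simp only [numDistinctRoots] at hcount
  obtain ⟨r, hrW, hrF, huniq, hmult⟩ :=
    Multiset.exists_count_eq_one_of_card_filter_add_one (s := (wronskian q p).roots)
      (P := (p * (p - q) * q).IsRoot) (by omega)
  exact ⟨r, (mem_roots hW0).mp hrW, hrF, fun s hs hsF => huniq s ((mem_roots hW0).mpr hs) hsF,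
    by rwa [count_roots] at hmult⟩

/-- Lemma 2.2(b): if the rational map `φ = p/q` (of degree `D`, with `φ(∞) = ∞`)
has exactly `D + 3` distinct points above `{0, 1, ∞}`, then there is exactly one
branch point of `φ` not above `{0, 1, ∞}` — i.e. exactly one root `r` of the
Wronskian `p′q − pq′` that is not a root of `p·(p − q)·q` — and it is a simple
root of the Wronskian. -/
theorem unique_extra_branch_point (p q : ℂ[X]) (D : ℕ) (hD : 1 ≤ D)
    (hp : p.natDegree = D) (hq : q.natDegree < D) (hcop : IsCoprime p q)
    (hcount : numDistinctRoots p + numDistinctRoots (p - q) + numDistinctRoots q + 1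
      = D + 3) :
    ∃ r : ℂ, (derivative p * q - p * derivative q).IsRoot r ∧
      ¬ (p * (p - q) * q).IsRoot r ∧
      (∀ s : ℂ, (derivative p * q - p * derivative q).IsRoot s →
        ¬ (p * (p - q) * q).IsRoot s → s = r) ∧
      rootMultiplicity r (derivative p * q - p * derivative q) = 1 :=
  unique_extra_branch_point_general p q D hp hq hcop hcount
end

section
/- In ℂ[X] the identity X²(4X² − 3)² − 1 = (X − 1)(X + 1)(2X − 1)²(2X + 1)² holds; moreover the polynomials X(4X² − 3) and (X − 1)(X + 1)(2X − 1)(2X + 1) are each squarefree and coprime to each other. (This certifies that φ(x) = x²(4x²−3)² is a Belyi covering of degree 6 with branching pattern [2]³ above 0, 2+2+1+1 above 1, and a single point of order 6 above ∞ — the covering H₃₉.) -/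
/-!
Both squarefreeness claims come from separability, certified by explicit Bézout relations
`a f + b f' = c` with `c` a nonzero constant. Coprimality is Pell's identity for Chebyshev
polynomials: `X(4X² − 3) = T₃` and `4X² − 1 = U₂`, and `T₃² − (X² − 1) U₂² = 1` is the
displayed identity, itself a Bézout relation between `T₃` and `(X² − 1) U₂`.
-/

open Polynomial

theorem isCoprime_of_mul_add_mul_eq_isUnit {R : Type*} [CommSemiring R] {x y a b u : R}
    (hu : IsUnit u) (h : a * x + b * y = u) : IsCoprime x y := by
  obtain ⟨v, hv⟩ := hu.exists_left_inv
  exact ⟨v * a, v * b, by rw [mul_assoc, mul_assoc, ← mul_add, h, hv]⟩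

theorem Polynomial.isUnit_ofNat {K : Type*} [Field K] [CharZero K] (n : ℕ) [n.AtLeastTwo] :
    IsUnit (OfNat.ofNat n : K[X]) := by
  rw [← map_ofNat C]
  exact isUnit_C.2 (Ne.isUnit (by norm_num))

theorem Polynomial.not_isRoot_and_isRoot_of_isCoprime {R : Type*} [CommRing R] [Nontrivial R]
    {p q : R[X]} (h : IsCoprime p q) (z : R) : ¬(p.IsRoot z ∧ q.IsRoot z) := by
  rintro ⟨hp, hq⟩
  simpa [coe_aeval_eq_eval, hp.eq_zero, hq.eq_zero] using aeval_ne_zero_of_isCoprime h z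

theorem separable_X_mul_four_X_sq_sub_three : Separable ((X : ℂ[X]) * (4 * X ^ 2 - 3)) := by
  have hderiv : derivative ((X : ℂ[X]) * (4 * X ^ 2 - 3)) = 12 * X ^ 2 - 3 := by
    simp only [derivative_mul, derivative_X, derivative_sub, derivative_X_pow, derivative_ofNat,
      Nat.cast_ofNat, map_ofNat]
    ring
  rw [separable_def, hderiv]
  exact isCoprime_of_mul_add_mul_eq_isUnit (a := -6 * X) (b := 2 * X ^ 2 - 1)
    (isUnit_ofNat 3) (by ring)

theorem separable_X_sub_one_mul_X_add_one_mul_two_X_sub_one_mul_two_X_add_one :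
    Separable (((X : ℂ[X]) - 1) * (X + 1) * (2 * X - 1) * (2 * X + 1)) := by
  have hderiv : derivative (((X : ℂ[X]) - 1) * (X + 1) * (2 * X - 1) * (2 * X + 1))
      = 16 * X ^ 3 - 10 * X := by
    simp only [derivative_mul, derivative_X, derivative_sub, derivative_add, derivative_one,
      derivative_ofNat]
    ring
  rw [separable_def, hderiv]
  exact isCoprime_of_mul_add_mul_eq_isUnit (a := 18 - 80 * X ^ 2) (b := 20 * X ^ 3 - 17 * X)
    (isUnit_ofNat 18) (by ring)

/-- Certificate for the covering `H₃₉`: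
`X²(4X² − 3)² − 1 = (X − 1)(X + 1)(2X − 1)²(2X + 1)²` in `ℂ[X]`, and the
polynomials `X(4X² − 3)` and `(X − 1)(X + 1)(2X − 1)(2X + 1)` are squarefree
with no common complex root.  Hence `φ(x) = x²(4x²−3)²` is a Belyi covering of
degree 6 with branching pattern `[2]³ = 2+2+1+1 = 6`. -/
theorem H39_certificate :
    (X : ℂ[X]) ^ 2 * (4 * X ^ 2 - 3) ^ 2 - 1
        = (X - 1) * (X + 1) * (2 * X - 1) ^ 2 * (2 * X + 1) ^ 2 ∧
    Squarefree ((X : ℂ[X]) * (4 * X ^ 2 - 3)) ∧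
    Squarefree (((X : ℂ[X]) - 1) * (X + 1) * (2 * X - 1) * (2 * X + 1)) ∧
    (∀ z : ℂ, ¬(((X : ℂ[X]) * (4 * X ^ 2 - 3)).IsRoot z ∧
      (((X : ℂ[X]) - 1) * (X + 1) * (2 * X - 1) * (2 * X + 1)).IsRoot z)) := by
  have hcoprime : IsCoprime ((X : ℂ[X]) * (4 * X ^ 2 - 3))
      (((X : ℂ[X]) - 1) * (X + 1) * (2 * X - 1) * (2 * X + 1)) :=
    ⟨X * (4 * X ^ 2 - 3), 1 - 4 * X ^ 2, by ring⟩
  exact ⟨by ring, separable_X_mul_four_X_sq_sub_three.squarefree,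
    separable_X_sub_one_mul_X_add_one_mul_two_X_sub_one_mul_two_X_add_one.squarefree,
    not_isRoot_and_isRoot_of_isCoprime hcoprime⟩
end
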